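/- arXiv:2412.11806 — 5 statements merged into one kernel-verified Lean document; each statement's English description precedes it below -/
import Mathlib

section
/- For the add-the-reciprocal sequence x_0 = 1, x_{k+1} = x_k + 1/x_k, the limit of x_k^2 / k as k → ∞ equals 2 (equivalently x_k / sqrt(k) → sqrt 2). -/
/-!
Squaring the recurrence gives `x (k+1)^2 = x k^2 + 2 + 1 / x k^2`. Hence `x k^2 ≥ 2k` grows
without bound, so the increments of `x k^2` tend to `2`, and by Stolz–Cesàro (the Cesàro mean of
the increments) so does `x k^2 / k`.
-/

open Filter Topology

theorem tendsto_div_natCast_of_tendsto_sub {u : ℕ → ℝ} {l : ℝ}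
    (h : Tendsto (fun n => u (n + 1) - u n) atTop (𝓝 l)) :
    Tendsto (fun n : ℕ => u n / n) atTop (𝓝 l) := by
  have hu : (fun n : ℕ => u n / n) = fun n : ℕ =>
      (n⁻¹ : ℝ) * ∑ i ∈ Finset.range n, (u (i + 1) - u i) + u 0 * (n : ℝ)⁻¹ := by
    funext n
    rw [Finset.sum_range_sub]
    ring
  have hinv : Tendsto (fun n : ℕ => (n : ℝ)⁻¹) atTop (𝓝 0) :=
    tendsto_inv_atTop_zero.comp tendsto_natCast_atTop_atTop
  rw [hu]
  simpa using h.cesaro.add (hinv.const_mul (u 0))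

section AddInv

variable {x : ℕ → ℝ}

theorem pos_of_add_inv (hrec : ∀ k, x (k + 1) = x k + 1 / x k) (h0 : 0 < x 0) (k : ℕ) :
    0 < x k := by
  induction k with
  | zero => exact h0
  | succ n ih => rw [hrec]; positivity

theorem sq_succ_of_add_inv (hrec : ∀ k, x (k + 1) = x k + 1 / x k) {k : ℕ} (hk : x k ≠ 0) :
    x (k + 1) ^ 2 = x k ^ 2 + 2 + (x k ^ 2)⁻¹ := by
  rw [hrec]
  field_simp
  ring

theorem two_mul_le_sq_of_add_inv (hrec : ∀ k, x (k + 1) = x k + 1 / x k) (h0 : 0 < x 0)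
    (k : ℕ) : 2 * (k : ℝ) ≤ x k ^ 2 := by
  induction k with
  | zero => simpa using sq_nonneg (x 0)
  | succ n ih =>
    rw [sq_succ_of_add_inv hrec (pos_of_add_inv hrec h0 n).ne']
    have : 0 ≤ (x n ^ 2)⁻¹ := by positivity
    push_cast
    linarith

end AddInv

theorem stmt_5 (x : ℕ → ℝ)
    (h0 : x 0 = 1)
    (hrec : ∀ k, x (k + 1) = x k + 1 / x k) :
    Tendsto (fun k : ℕ => x k ^ 2 / (k : ℝ)) atTop (nhds 2) := by
  have hx0 : 0 < x 0 := by rw [h0]; exact one_pos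
  have hsq : Tendsto (fun k => x k ^ 2) atTop atTop :=
    tendsto_atTop_mono (two_mul_le_sq_of_add_inv hrec hx0)
      (tendsto_natCast_atTop_atTop.const_mul_atTop two_pos)
  have hinc : (fun k => x (k + 1) ^ 2 - x k ^ 2) = fun k => 2 + (x k ^ 2)⁻¹ := by
    funext k
    rw [sq_succ_of_add_inv hrec (pos_of_add_inv hrec hx0 k).ne']
    ring
  apply tendsto_div_natCast_of_tendsto_sub
  rw [hinc]
  simpa using hsq.inv_tendsto_atTop.const_add 2
end

section
/- For the sequence x_0 = 1, x_{k+1} = x_k * sqrt(1 + 1/x_k) (the p-sequence with p = 1/2), x_k / k → 1/2 as k → ∞. -/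
/-!
Rationalising, `t * √(1 + 1/t) - t = 1 / (√(1 + 1/t) + 1)`, which tends to `1/2` as `t → ∞`.
Since `x (k+1)^2 = x k^2 + x k ≥ x k^2 + 1`, the sequence is unbounded, so its increments tend
to `1/2`, and by Cesàro so does `x k / k`.
-/

open Filter Topology Finset

theorem Filter.Tendsto.inv_smul_of_tendsto_sub {E : Type*} [NormedAddCommGroup E]
    [NormedSpace ℝ E] {u : ℕ → E} {l : E}
    (h : Tendsto (fun k => u (k + 1) - u k) atTop (𝓝 l)) :
    Tendsto (fun n : ℕ => (n⁻¹ : ℝ) • u n) atTop (𝓝 l) := by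
  have hmean : Tendsto (fun n : ℕ => (n⁻¹ : ℝ) • (u n - u 0)) atTop (𝓝 l) := by
    simpa only [sum_range_sub] using h.cesaro_smul
  have hinit : Tendsto (fun n : ℕ => (n⁻¹ : ℝ) • u 0) atTop (𝓝 0) := by
    simpa using (tendsto_inv_atTop_nhds_zero_nat (𝕜 := ℝ)).smul_const (u 0)
  simpa [← smul_add] using hmean.add hinit

namespace Real

variable {t : ℝ}

lemma one_le_one_add_inv (ht : 0 ≤ t) : 1 ≤ 1 + 1 / t := by
  have : 0 ≤ 1 / t := by positivity
  linarith

lemma self_le_mul_sqrt_one_add_inv (ht : 0 ≤ t) : t ≤ t * √(1 + 1 / t) :=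
  le_mul_of_one_le_right ht (one_le_sqrt.mpr (one_le_one_add_inv ht))

lemma mul_sqrt_one_add_inv_sq (ht : 0 < t) : (t * √(1 + 1 / t)) ^ 2 = t ^ 2 + t := by
  rw [mul_pow, sq_sqrt (zero_le_one.trans (one_le_one_add_inv ht.le))]
  field_simp

lemma mul_sqrt_one_add_inv_sub_self (ht : 0 < t) :
    t * √(1 + 1 / t) - t = 1 / (√(1 + 1 / t) + 1) := by
  set s := √(1 + 1 / t)
  have hs : s ^ 2 = 1 + 1 / t := sq_sqrt (zero_le_one.trans (one_le_one_add_inv ht.le))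
  have hs1 : 0 < s + 1 := by positivity
  rw [eq_div_iff hs1.ne']
  calc (t * s - t) * (s + 1) = t * (s ^ 2 - 1) := by ring
    _ = 1 := by rw [hs]; field_simp; ring

lemma tendsto_mul_sqrt_one_add_inv_sub_self :
    Tendsto (fun t : ℝ => t * √(1 + 1 / t) - t) atTop (𝓝 (1 / 2)) := by
  have hinv : Tendsto (fun t : ℝ => 1 + 1 / t) atTop (𝓝 (1 + 0)) := by
    simpa only [one_div] using tendsto_inv_atTop_zero.const_add 1
  have hlim : Tendsto (fun t : ℝ => 1 / (√(1 + 1 / t) + 1)) atTop (𝓝 (1 / (√(1 + 0) + 1))) :=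
    tendsto_const_nhds.div (hinv.sqrt.add_const 1) (by positivity)
  rw [add_zero, sqrt_one, one_add_one_eq_two] at hlim
  refine hlim.congr' ?_
  filter_upwards [eventually_gt_atTop 0] with t ht
  exact (mul_sqrt_one_add_inv_sub_self ht).symm

end Real

theorem stmt_9 (x : ℕ → ℝ)
    (h0 : x 0 = 1)
    (hrec : ∀ k, x (k + 1) = x k * Real.sqrt (1 + 1 / x k)) :
    Tendsto (fun k : ℕ => x k / (k : ℝ)) atTop (nhds (1 / 2)) := by
  have hpos : ∀ k, 0 < x k := fun k => by
    induction k with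
    | zero => simp [h0]
    | succ k ih => rw [hrec]; positivity
  have hsq : ∀ k, x (k + 1) ^ 2 = x k ^ 2 + x k := fun k => by
    rw [hrec, Real.mul_sqrt_one_add_inv_sq (hpos k)]
  have hmono : Monotone x := monotone_nat_of_le_succ fun k => by
    rw [hrec]; exact Real.self_le_mul_sqrt_one_add_inv (hpos k).le
  have hone : ∀ k, 1 ≤ x k := fun k => h0 ▸ hmono k.zero_le
  have hsq_ge : ∀ k : ℕ, (k : ℝ) ≤ x k ^ 2 := fun k => by
    induction k with
    | zero => simpa using sq_nonneg (x 0)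
    | succ k ih => push_cast; linarith [hsq k, hone k]
  have hunbdd : Tendsto x atTop atTop :=
    tendsto_atTop_mono (fun k => Real.sqrt_le_left (hpos k).le |>.mpr (hsq_ge k))
      (Real.tendsto_sqrt_atTop.comp tendsto_natCast_atTop_atTop)
  have hdiff : Tendsto (fun k => x (k + 1) - x k) atTop (𝓝 (1 / 2)) := by
    simpa only [hrec, Function.comp_def] using
      Real.tendsto_mul_sqrt_one_add_inv_sub_self.comp hunbdd
  simpa [div_eq_inv_mul] using hdiff.inv_smul_of_tendsto_sub
end

section
/- For the sequence x_0 = 1, x_{k+1} = sqrt(1 + x_k + x_k^2), the reciprocal y_k = 1/x_k satisfies y_{k+1} = y_k / sqrt(1 + y_k + y_k^2), and x_k / k → 1/2 as k → ∞. -/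
open Filter Finset

theorem stmt_10 (x : ℕ → ℝ)
    (h0 : x 0 = 1)
    (hrec : ∀ k, x (k + 1) = Real.sqrt (1 + x k + x k ^ 2)) :
    (∀ k, 1 / x (k + 1) = (1 / x k) / Real.sqrt (1 + 1 / x k + (1 / x k) ^ 2)) ∧
      Tendsto (fun k : ℕ => x k / (k : ℝ)) atTop (nhds (1 / 2)) := by
  -- all terms are at least 1
  have h1 : ∀ k, 1 ≤ x k := by
    intro k
    induction k with
    | zero => simp [h0]
    | succ n ih =>
      rw [hrec]
      have h := Real.sqrt_le_sqrt (show (1:ℝ) ≤ 1 + x n + x n ^ 2 by nlinarith)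
      simpa using h
  have hpos : ∀ k, 0 < x k := fun k => lt_of_lt_of_le one_pos (h1 k)
  -- lower bound on the step
  have hlow : ∀ k, x k + 1/2 ≤ x (k + 1) := by
    intro k
    have hs := Real.sq_sqrt (show (0:ℝ) ≤ 1 + x k + x k ^ 2 by nlinarith [h1 k])
    have hsn := Real.sqrt_nonneg (1 + x k + x k ^ 2)
    rw [hrec]
    nlinarith [h1 k]
  -- upper bound on the step
  have hup : ∀ k, x (k + 1) ≤ x k + 1/2 + 3/(8 * x k) := by
    intro k
    have hxk := hpos k
    rw [hrec]
    have h2 : 1 + x k + x k ^ 2 ≤ (x k + 1/2 + 3/(8 * x k)) ^ 2 := by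
      have he : (x k + 1/2 + 3/(8 * x k)) ^ 2
          = x k ^ 2 + x k + 1 + 3/(8 * x k) + 9/(64 * x k ^ 2) := by
        field_simp; ring
      rw [he]
      have h3 : 0 < 3/(8 * x k) := by positivity
      have h4 : 0 < 9/(64 * x k ^ 2) := by positivity
      linarith
    calc Real.sqrt (1 + x k + x k ^ 2) ≤ Real.sqrt ((x k + 1/2 + 3/(8 * x k)) ^ 2) :=
          Real.sqrt_le_sqrt h2
      _ = x k + 1/2 + 3/(8 * x k) := Real.sqrt_sq (by positivity)
  -- linear lower bound
  have hlin : ∀ k : ℕ, 1 + (k : ℝ)/2 ≤ x k := by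
    intro k
    induction k with
    | zero => simp [h0]
    | succ n ih =>
      have := hlow n
      push_cast
      linarith
  constructor
  · -- Part 1
    intro k
    have ha := hpos k
    have hb := hpos (k + 1)
    have hs : 0 < Real.sqrt (1 + x k + x k ^ 2) := by rw [← hrec k]; exact hb
    have key : Real.sqrt (1 + 1 / x k + (1 / x k) ^ 2)
        = Real.sqrt (1 + x k + x k ^ 2) / x k := by
      rw [show 1 + 1 / x k + (1 / x k) ^ 2 = (1 + x k + x k ^ 2) / x k ^ 2 by
        field_simp; ring]
      rw [Real.sqrt_div (by nlinarith [h1 k]), Real.sqrt_sq ha.le]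
    rw [key, hrec k]
    field_simp
  · -- Part 2
    set d : ℕ → ℝ := fun k => x (k + 1) - x k with hd_def
    have hub : ∀ k, d k ≤ 1/2 + 3/(8 * (1 + (k:ℝ)/2)) := by
      intro k
      have h5 : 0 < 1 + (k:ℝ)/2 := by positivity
      have h6 : 3/(8 * x k) ≤ 3/(8 * (1 + (k:ℝ)/2)) := by
        apply div_le_div_of_nonneg_left (by norm_num) (by positivity)
        nlinarith [hlin k]
      have := hup k
      simp only [hd_def]
      linarith
    have hlb : ∀ k, (1:ℝ)/2 ≤ d k := fun k => by
      have := hlow k; simp only [hd_def]; linarith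
    have htop : Tendsto (fun k : ℕ => 8 * (1 + (k:ℝ)/2)) atTop atTop := by
      apply tendsto_atTop_mono (fun k => ?_) tendsto_natCast_atTop_atTop
      have : (0:ℝ) ≤ (k:ℝ) := Nat.cast_nonneg k
      linarith
    have hzero : Tendsto (fun k : ℕ => 3/(8 * (1 + (k:ℝ)/2))) atTop (nhds 0) :=
      tendsto_const_nhds.div_atTop htop
    have hup_lim : Tendsto (fun k : ℕ => 1/2 + 3/(8 * (1 + (k:ℝ)/2))) atTop (nhds (1/2)) := by
      have h := hzero.const_add ((1:ℝ)/2)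
      simpa using h
    have hd : Tendsto d atTop (nhds (1/2)) :=
      tendsto_of_tendsto_of_tendsto_of_le_of_le tendsto_const_nhds hup_lim hlb hub
    have hces := hd.cesaro
    have hone : Tendsto (fun k : ℕ => 1 / (k:ℝ)) atTop (nhds 0) :=
      tendsto_one_div_atTop_nhds_zero_nat
    have heq : (fun k : ℕ => x k / (k : ℝ))
        = fun k : ℕ => 1/(k:ℝ) + (k:ℝ)⁻¹ • ∑ i ∈ range k, d i := by
      funext k
      have hsum : ∑ i ∈ range k, d i = x k - 1 := by
        simp only [hd_def]
        rw [Finset.sum_range_sub, h0]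
      rw [hsum]
      simp only [smul_eq_mul]
      rw [div_eq_mul_inv, mul_comm]
      ring
    rw [heq]
    have := hone.add hces
    simpa using this
end

section
/- For the sequence y_0 = 1, y_{k+1} = y_k * exp(-y_k), the sequence is positive, strictly decreasing, converges to 0, and satisfies k * y_k → 1 as k → ∞. -/
open Filter

theorem stmt_14 (y : ℕ → ℝ)
    (h0 : y 0 = 1)
    (hrec : ∀ k, y (k + 1) = y k * Real.exp (-y k)) :
    (∀ k, 0 < y k) ∧ StrictAnti y ∧ Tendsto y atTop (nhds 0) ∧
      Tendsto (fun k : ℕ => (k : ℝ) * y k) atTop (nhds 1) := by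
  have hpos : ∀ k, 0 < y k := by
    intro k
    induction k with
    | zero => simp [h0]
    | succ n ih => rw [hrec]; positivity
  have hanti : StrictAnti y := by
    apply strictAnti_nat_of_succ_lt
    intro n
    rw [hrec]
    have h1 : Real.exp (-y n) < 1 := by
      rw [Real.exp_lt_one_iff]
      linarith [hpos n]
    calc y n * Real.exp (-y n) < y n * 1 := by
          exact mul_lt_mul_of_pos_left h1 (hpos n)
      _ = y n := mul_one _
  -- convergence to some limit L
  have hbdd : BddBelow (Set.range y) := ⟨0, by rintro _ ⟨k, rfl⟩; exact (hpos k).le⟩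
  set L := ⨅ k, y k with hL
  have hlim : Tendsto y atTop (nhds L) := tendsto_atTop_ciInf hanti.antitone hbdd
  have hLnonneg : 0 ≤ L := le_ciInf fun k => (hpos k).le
  have hshift : Tendsto (fun k => y (k + 1)) atTop (nhds L) :=
    hlim.comp (tendsto_add_atTop_nat 1)
  have hshift2 : Tendsto (fun k => y k * Real.exp (-y k)) atTop (nhds (L * Real.exp (-L))) :=
    hlim.mul ((Real.continuous_exp.tendsto _).comp hlim.neg)
  have hLeq : L = L * Real.exp (-L) := by
    apply tendsto_nhds_unique hshift
    simpa only [hrec] using hshift2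
  have hL0 : L = 0 := by
    by_contra h
    have hLpos : 0 < L := lt_of_le_of_ne hLnonneg (Ne.symm h)
    have : Real.exp (-L) < 1 := by rw [Real.exp_lt_one_iff]; linarith
    nlinarith
  rw [hL0] at hlim
  refine ⟨hpos, hanti, hlim, ?_⟩
  -- step differences tend to 1
  have hdiff : ∀ k, (y (k+1))⁻¹ - (y k)⁻¹ = (Real.exp (y k) - 1) / y k := by
    intro k
    rw [hrec, mul_inv, Real.exp_neg, inv_inv]
    field_simp
  have hslope : Tendsto (fun x : ℝ => (Real.exp x - 1) / x) (nhdsWithin 0 {(0:ℝ)}ᶜ) (nhds 1) := by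
    have := (Real.hasDerivAt_exp 0)
    rw [hasDerivAt_iff_tendsto_slope] at this
    simpa [slope_fun_def, Real.exp_zero, div_eq_inv_mul] using this
  have hy_in : Tendsto y atTop (nhdsWithin 0 {(0:ℝ)}ᶜ) := by
    apply tendsto_nhdsWithin_of_tendsto_nhds_of_eventually_within _ hlim
    filter_upwards with k
    exact Set.mem_compl_singleton_iff.2 (hpos k).ne'
  have hd : Tendsto (fun k => (y (k+1))⁻¹ - (y k)⁻¹) atTop (nhds 1) := by
    simp only [hdiff]
    exact hslope.comp hy_in
  have hcesaro := hd.cesaro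
  have hsum : ∀ n, ∑ i ∈ Finset.range n, ((y (i+1))⁻¹ - (y i)⁻¹) = (y n)⁻¹ - 1 := by
    intro n
    rw [Finset.sum_range_sub (fun i => (y i)⁻¹), h0, inv_one]
  have hmain : Tendsto (fun n : ℕ => (n : ℝ)⁻¹ * (y n)⁻¹) atTop (nhds 1) := by
    have h1 : Tendsto (fun n : ℕ => (n : ℝ)⁻¹ * ((y n)⁻¹ - 1) + (n:ℝ)⁻¹) atTop (nhds (1 + 0)) := by
      apply Tendsto.add
      · simpa only [hsum] using hcesaro
      · exact tendsto_inv_atTop_nhds_zero_nat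
    rw [add_zero] at h1
    apply h1.congr
    intro n
    ring
  have hinv : Tendsto (fun n : ℕ => ((n : ℝ)⁻¹ * (y n)⁻¹)⁻¹) atTop (nhds 1⁻¹) :=
    hmain.inv₀ one_ne_zero
  rw [inv_one] at hinv
  apply hinv.congr'
  filter_upwards [eventually_gt_atTop 0] with n hn
  have : (n : ℝ) ≠ 0 := Nat.cast_ne_zero.2 hn.ne'
  rw [mul_inv, inv_inv, inv_inv]
end

section
/- If a positive real sequence x_k satisfies x_k = α k + β ln k + C + o(1) as k → ∞ with α ≠ 0, then y_k = 1/x_k satisfies k^2 * (y_k - 1/(α k)) + (β/α^2) * ln k → -C/α^2. -/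
open Filter

open Real Topology

/-
With `e k := x k - α k - β log k → C`, the gap `k² (1/x k - 1/(α k)) + (β/α²) log k` is exactly
`(k / x k) · ((β/α²)(β log² k / k + e k · log k / k) - e k / α)`. Since `log^n k / k → 0`, also
`x k / k → α`, so `k / x k → 1/α` and the whole expression tends to `(1/α) · (0 - C/α) = -C/α²`.
-/

lemma tendsto_log_pow_div_natCast (n : ℕ) :
    Tendsto (fun k : ℕ => log k ^ n / k) atTop (𝓝 0) := by
  simpa [Function.comp_def] using
    (tendsto_pow_log_div_mul_add_atTop 1 0 n one_ne_zero).comp tendsto_natCast_atTop_atTop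

lemma tendsto_log_div_natCast : Tendsto (fun k : ℕ => log k / k) atTop (𝓝 0) := by
  simpa only [pow_one] using tendsto_log_pow_div_natCast 1

lemma tendsto_div_natCast_of_tendsto_sub_mul_sub_mul_log {α β C : ℝ} {x : ℕ → ℝ}
    (hx : Tendsto (fun k : ℕ => x k - α * k - β * log k) atTop (𝓝 C)) :
    Tendsto (fun k : ℕ => x k / k) atTop (𝓝 α) := by
  have hlim : Tendsto (fun k : ℕ => α + β * (log k / k) + (x k - α * k - β * log k) / k)
      atTop (𝓝 (α + β * 0 + C * 0)) :=
    (tendsto_const_nhds.add (tendsto_log_div_natCast.const_mul β)).add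
      (hx.mul (tendsto_inv_atTop_zero.comp tendsto_natCast_atTop_atTop))
  rw [mul_zero, mul_zero, add_zero, add_zero] at hlim
  refine hlim.congr' ?_
  filter_upwards [eventually_ne_atTop 0] with k hk
  field_simp
  ring

lemma sq_mul_one_div_sub_one_div_add_mul_eq {α β t x L : ℝ} (hα : α ≠ 0) (ht : t ≠ 0)
    (hx : x ≠ 0) :
    t ^ 2 * (1 / x - 1 / (α * t)) + β / α ^ 2 * L =
      t / x * (β / α ^ 2 * (β * (L ^ 2 / t) + (x - α * t - β * L) * (L / t))
        - (x - α * t - β * L) / α) := by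
  field_simp
  ring

theorem stmt_17_general (α β C : ℝ) (hα : α ≠ 0) (x y : ℕ → ℝ)
    (hy : ∀ k, y k = 1 / x k)
    (hx : Tendsto (fun k : ℕ => x k - α * (k : ℝ) - β * Real.log (k : ℝ)) atTop (nhds C)) :
    Tendsto (fun k : ℕ =>
        (k : ℝ) ^ 2 * (y k - 1 / (α * (k : ℝ))) + (β / α ^ 2) * Real.log (k : ℝ))
      atTop (nhds (-C / α ^ 2)) := by
  obtain rfl : y = fun k => 1 / x k := funext hy
  have hslope := tendsto_div_natCast_of_tendsto_sub_mul_sub_mul_log hx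
  have hratio : Tendsto (fun k : ℕ => (k : ℝ) / x k) atTop (𝓝 α⁻¹) := by
    simpa only [inv_div] using hslope.inv₀ hα
  have hlim := hratio.mul ((((tendsto_log_pow_div_natCast 2).const_mul β).add
    (hx.mul tendsto_log_div_natCast)).const_mul (β / α ^ 2) |>.sub (hx.div_const α))
  rw [show α⁻¹ * (β / α ^ 2 * (β * 0 + C * 0) - C / α) = -C / α ^ 2 by field_simp; ring] at hlim
  refine hlim.congr' ?_
  filter_upwards [eventually_ne_atTop 0, hslope.eventually_ne hα] with k hk hxk
  exact (sq_mul_one_div_sub_one_div_add_mul_eq hα (Nat.cast_ne_zero.2 hk)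
    fun h => hxk (by rw [h, zero_div])).symm

theorem stmt_17 (α β C : ℝ) (hα : α ≠ 0) (x y : ℕ → ℝ)
    (hpos : ∀ k, 0 < x k)
    (hy : ∀ k, y k = 1 / x k)
    (hx : Tendsto (fun k : ℕ => x k - α * (k : ℝ) - β * Real.log (k : ℝ)) atTop (nhds C)) :
    Tendsto (fun k : ℕ =>
        (k : ℝ) ^ 2 * (y k - 1 / (α * (k : ℝ))) + (β / α ^ 2) * Real.log (k : ℝ))
      atTop (nhds (-C / α ^ 2)) :=
  stmt_17_general α β C hα x y hy hx
end
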